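/- Comparison of the two equivariant deformations of Grothendieck polynomials: for every integer ℓ ≥ 1 one has G†_ℓ(z,ζ) − G'_ℓ(z,ζ) = (-1)^{ℓ+1} Σ_{m=1}^{k} (-1)^{m-1} e_{ℓ+m}(ζ) (i.e., (-1)^{ℓ+1}(e_{ℓ+1}(ζ) − e_{ℓ+2}(ζ) + ⋯ + (-1)^{k-1} e_{ℓ+k}(ζ))) in ℤ[z_1,…,z_k, ζ_1,…,ζ_n]. -/

import Mathlib

open Finset MvPolynomial

noncomputable section

/-- The elementary symmetric polynomial `e_r` of a family of ring elements. -/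
def esymmF {R : Type*} [CommRing R] {m : ℕ} (f : Fin m → R) (r : ℕ) : R :=
  ∑ t ∈ Finset.powersetCard r Finset.univ, ∏ j ∈ t, f j

/-- The complete homogeneous symmetric polynomial `h_r` of a family. -/
def hsymmF {R : Type*} [CommRing R] {m : ℕ} (f : Fin m → R) (r : ℕ) : R :=
  ∑ μ : Sym (Fin m) r, (μ.1.map f).prod

/-- `e_r(z)`: elementary symmetric polynomial in the variables `z_1,…,z_k`
inside `ℤ[z_1,…,z_k, ζ_1,…,ζ_n]`. -/
def eZ (k n : ℕ) (r : ℕ) : MvPolynomial (Fin k ⊕ Fin n) ℤ :=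
  esymmF (fun i : Fin k => X (Sum.inl i)) r

/-- `e_r(ζ)`: elementary symmetric polynomial in the variables `ζ_1,…,ζ_n`. -/
def eZeta (k n : ℕ) (r : ℕ) : MvPolynomial (Fin k ⊕ Fin n) ℤ :=
  esymmF (fun j : Fin n => X (Sum.inr j)) r

/-- `h_r(z)`: complete homogeneous symmetric polynomial in `z_1,…,z_k`. -/
def hZ (k n : ℕ) (r : ℕ) : MvPolynomial (Fin k ⊕ Fin n) ℤ :=
  hsymmF (fun i : Fin k => X (Sum.inl i)) r

/-- The single-row Grothendieck polynomial
`G_j(z) = Σ_{a,b ≥ 0, a+b ≤ k} (-1)^b h_{j+a}(z) e_b(z)`. -/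
def GZ (k n : ℕ) (j : ℕ) : MvPolynomial (Fin k ⊕ Fin n) ℤ :=
  ∑ a ∈ Finset.range (k + 1), ∑ b ∈ Finset.range (k + 1 - a),
    (-1) ^ b * hZ k n (j + a) * eZ k n b

/-- The equivariant complete homogeneous polynomial
`h'_j(z,ζ) = Σ_{a+b=j} (-1)^a e_a(ζ) h_b(z)`. -/
def hPrime (k n : ℕ) (j : ℕ) : MvPolynomial (Fin k ⊕ Fin n) ℤ :=
  ∑ p ∈ Finset.HasAntidiagonal.antidiagonal j, (-1) ^ p.1 * eZeta k n p.1 * hZ k n p.2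

/-- The equivariant Grothendieck polynomial
`G'_j(z,ζ) = Σ_{a+b=j} (-1)^a e_a(ζ) G_b(z)`. -/
def GPrime (k n : ℕ) (j : ℕ) : MvPolynomial (Fin k ⊕ Fin n) ℤ :=
  ∑ p ∈ Finset.HasAntidiagonal.antidiagonal j, (-1) ^ p.1 * eZeta k n p.1 * GZ k n p.2

/-- The truncation `c^z_{≥j} = Σ_{i=j}^{k} (-1)^{i-j} e_i(z)`. -/
def cGeZ (k n : ℕ) (j : ℕ) : MvPolynomial (Fin k ⊕ Fin n) ℤ :=
  ∑ i ∈ Finset.Icc j k, (-1) ^ (i - j) * eZ k n i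

/-- `c'_{≥ℓ}(z,ζ) = e_ℓ(ζ) + Σ_{m=1}^{k-1} e_{ℓ-m}(ζ) c^z_{≥ m+1}`,
with the convention `e_s(ζ) = 0` for `s < 0` (i.e. for `m > ℓ`). -/
def cPrimeGe (k n : ℕ) (ℓ : ℕ) : MvPolynomial (Fin k ⊕ Fin n) ℤ :=
  eZeta k n ℓ + ∑ m ∈ Finset.Icc 1 (k - 1),
    (if m ≤ ℓ then eZeta k n (ℓ - m) * cGeZ k n (m + 1) else 0)

/-- `G†_j(z,ζ) = Σ_{a,b ≥ 0, a+b ≤ k} (-1)^b h'_{j+a}(z,ζ) e_b(z)`. -/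
def GDagger (k n : ℕ) (j : ℕ) : MvPolynomial (Fin k ⊕ Fin n) ℤ :=
  ∑ a ∈ Finset.range (k + 1), ∑ b ∈ Finset.range (k + 1 - a),
    (-1) ^ b * hPrime k n (j + a) * eZ k n b


/-!
With `H(t) = Σ h_r t^r` and `E(t) = Σ (-1)^r e_r t^r`, adjoining a variable `x` multiplies `E`
by `1 - x t` and divides `H` by it, so `H E = 1`: the sums `Σ_{a+b=s} (-1)^b h_a e_b` vanish
for `s ≥ 1`, and every triangular sum `Σ_{a+b ≤ N} (-1)^b h_a e_b` equals `1`.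

Expanding `h'_{ℓ+a} = Σ_c (-1)^c e_c(ζ) h_{ℓ+a-c}(z)` inside `G†_ℓ`, the terms with `c ≤ ℓ`
reassemble to `G'_ℓ`, while the term with `c = ℓ + m` (`1 ≤ m ≤ k`) contributes
`(-1)^{ℓ+m} e_{ℓ+m}(ζ)` times a triangular sum of size `k - m`, which is `1`.
-/

section SymmetricFunctions

variable {R : Type*} [CommRing R] {m : ℕ}

@[simp] lemma esymmF_zero (f : Fin m → R) : esymmF f 0 = 1 := by
  simp [esymmF]

@[simp] lemma hsymmF_zero (f : Fin m → R) : hsymmF f 0 = 1 := by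
  simp [hsymmF, Sym.eq_nil_of_card_zero]

lemma esymmF_fin_zero_succ (f : Fin 0 → R) (r : ℕ) : esymmF f (r + 1) = 0 := by
  rw [esymmF, powersetCard_eq_empty.mpr (by simp), sum_empty]

lemma hsymmF_fin_zero_succ (f : Fin 0 → R) (r : ℕ) : hsymmF f (r + 1) = 0 := by
  simp [hsymmF]

lemma Multiset.esymm_cons_succ (x : R) (s : Multiset R) (r : ℕ) :
    (x ::ₘ s).esymm (r + 1) = s.esymm (r + 1) + x * s.esymm r := by
  simp [Multiset.esymm, Multiset.powersetCard_cons, Multiset.sum_map_mul_left]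

lemma esymmF_cons_succ (x : R) (f : Fin m → R) (r : ℕ) :
    esymmF (Fin.cons x f : Fin (m + 1) → R) (r + 1) = esymmF f (r + 1) + x * esymmF f r := by
  have hcons : univ.val.map (Fin.cons x f : Fin (m + 1) → R) = x ::ₘ univ.val.map f := by
    simp [List.ofFn_succ]
  simp only [esymmF, ← Finset.esymm_map_val, hcons, Multiset.esymm_cons_succ]

lemma sum_sym_option_succ {α : Type*} [Fintype α] [DecidableEq α] (g : Option α → R) (r : ℕ) :
    ∑ μ : Sym (Option α) (r + 1), (μ.1.map g).prod
      = ∑ μ : Sym α (r + 1), (μ.1.map (g ∘ some)).prod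
        + g none * ∑ μ : Sym (Option α) r, (μ.1.map g).prod := by
  rw [← Equiv.sum_comp symOptionSuccEquiv.symm, Fintype.sum_sum_type, add_comm, mul_sum]
  congr 1
  · refine sum_congr rfl fun μ _ => ?_
    simp [symOptionSuccEquiv, Multiset.map_map]
  · refine sum_congr rfl fun μ _ => ?_
    simp [symOptionSuccEquiv, Sym.coe_cons]

lemma hsymmF_cons_eq_sum_sym_option (x : R) (f : Fin m → R) (r : ℕ) :
    hsymmF (Fin.cons x f : Fin (m + 1) → R) r
      = ∑ μ : Sym (Option (Fin m)) r, (μ.1.map fun o => o.elim x f).prod := by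
  rw [hsymmF, ← Equiv.sum_comp (Sym.equivCongr (finSuccEquiv m)).symm]
  refine sum_congr rfl fun μ _ => ?_
  simp only [Sym.equivCongr, Equiv.coe_fn_symm_mk, Sym.val_eq_coe, Sym.coe_map, Multiset.map_map]
  congr 2
  funext o
  cases o <;> simp

lemma hsymmF_cons_succ (x : R) (f : Fin m → R) (r : ℕ) :
    hsymmF (Fin.cons x f : Fin (m + 1) → R) (r + 1)
      = hsymmF f (r + 1) + x * hsymmF (Fin.cons x f : Fin (m + 1) → R) r := by
  rw [hsymmF_cons_eq_sum_sym_option, hsymmF_cons_eq_sum_sym_option, sum_sym_option_succ]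
  rfl

end SymmetricFunctions

section GeneratingSeries

variable {R : Type*} [CommRing R] {m : ℕ}

def esymmSeries (f : Fin m → R) : PowerSeries R :=
  PowerSeries.mk fun r => (-1) ^ r * esymmF f r

def hsymmSeries (f : Fin m → R) : PowerSeries R :=
  PowerSeries.mk (hsymmF f)

lemma esymmSeries_cons (x : R) (f : Fin m → R) :
    esymmSeries (Fin.cons x f : Fin (m + 1) → R)
      = (1 - PowerSeries.C x * PowerSeries.X) * esymmSeries f := by
  ext (_ | r)
  · simp [esymmSeries]
  · simp only [esymmSeries, PowerSeries.coeff_mk, esymmF_cons_succ, sub_mul, one_mul, mul_assoc,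
      map_sub, PowerSeries.coeff_C_mul, PowerSeries.coeff_succ_X_mul]
    ring

lemma one_sub_mul_hsymmSeries_cons (x : R) (f : Fin m → R) :
    (1 - PowerSeries.C x * PowerSeries.X) * hsymmSeries (Fin.cons x f : Fin (m + 1) → R)
      = hsymmSeries f := by
  ext (_ | r)
  · simp [hsymmSeries]
  · simp [hsymmSeries, sub_mul, mul_assoc, PowerSeries.coeff_succ_X_mul, hsymmF_cons_succ]

lemma hsymmSeries_mul_esymmSeries (f : Fin m → R) : hsymmSeries f * esymmSeries f = 1 := by
  induction m with
  | zero =>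
    have hE : esymmSeries f = 1 := by
      ext (_ | r) <;> simp [esymmSeries, esymmF_fin_zero_succ, PowerSeries.coeff_one]
    have hH : hsymmSeries f = 1 := by
      ext (_ | r) <;> simp [hsymmSeries, hsymmF_fin_zero_succ, PowerSeries.coeff_one]
    rw [hE, hH, one_mul]
  | succ m ih =>
    rw [← Fin.cons_self_tail f, esymmSeries_cons, mul_left_comm, ← mul_assoc,
      one_sub_mul_hsymmSeries_cons, ih]

lemma sum_antidiagonal_hsymmF_mul_esymmF (f : Fin m → R) {s : ℕ} (hs : s ≠ 0) :
    ∑ p ∈ antidiagonal s, (-1) ^ p.2 * hsymmF f p.1 * esymmF f p.2 = 0 := by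
  have := congrArg (PowerSeries.coeff s) (hsymmSeries_mul_esymmSeries f)
  rw [PowerSeries.coeff_mul, PowerSeries.coeff_one, if_neg hs] at this
  rw [← this]
  refine sum_congr rfl fun p _ => ?_
  simp only [hsymmSeries, esymmSeries, PowerSeries.coeff_mk]
  ring

end GeneratingSeries

section TriangleSum

variable {A : Type*} [CommRing A]

def triangleSum (N : ℕ) (u e : ℕ → A) : A :=
  ∑ a ∈ range (N + 1), ∑ b ∈ range (N + 1 - a), (-1) ^ b * u a * e b

lemma triangleSum_succ (N : ℕ) (u e : ℕ → A) :
    triangleSum (N + 1) u e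
      = triangleSum N u e + ∑ p ∈ antidiagonal (N + 1), (-1) ^ p.2 * u p.1 * e p.2 := by
  have inner : ∀ a ∈ range (N + 1), ∑ b ∈ range (N + 1 + 1 - a), (-1) ^ b * u a * e b
      = ∑ b ∈ range (N + 1 - a), (-1) ^ b * u a * e b
        + (-1) ^ (N + 1 - a) * u a * e (N + 1 - a) := by
    intro a ha
    rw [show N + 1 + 1 - a = N + 1 - a + 1 by grind, sum_range_succ]
  rw [triangleSum, sum_range_succ, sum_congr rfl inner, sum_add_distrib,
    Nat.sum_antidiagonal_eq_sum_range_succ fun a b => (-1) ^ b * u a * e b,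
    sum_range_succ (fun a => (-1) ^ (N + 1 - a) * u a * e (N + 1 - a)) (N + 1)]
  simp only [triangleSum, add_tsub_cancel_left, tsub_self, range_one, sum_singleton, pow_zero,
    one_mul]
  ring

lemma triangleSum_eq_one {u e : ℕ → A} (h₀ : u 0 * e 0 = 1)
    (h : ∀ s ≠ 0, ∑ p ∈ antidiagonal s, (-1) ^ p.2 * u p.1 * e p.2 = 0) (N : ℕ) :
    triangleSum N u e = 1 := by
  induction N with
  | zero => simp [triangleSum, h₀]
  | succ N ih => rw [triangleSum_succ, ih, h _ N.succ_ne_zero, add_zero]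

lemma triangleSum_add (N : ℕ) (u v e : ℕ → A) :
    triangleSum N (fun a => u a + v a) e = triangleSum N u e + triangleSum N v e := by
  simp only [triangleSum, mul_add, add_mul, sum_add_distrib]

lemma triangleSum_sum_mul {ι : Type*} (N : ℕ) (s : Finset ι) (c : ι → A) (u : ι → ℕ → A)
    (e : ℕ → A) :
    triangleSum N (fun a => ∑ i ∈ s, c i * u i a) e = ∑ i ∈ s, c i * triangleSum N (u i) e := by
  simp only [triangleSum, mul_sum, sum_mul]
  rw [sum_congr rfl fun a _ => sum_comm (s := range (N + 1 - a)) (t := s), sum_comm]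
  exact sum_congr rfl fun i _ => sum_congr rfl fun a _ => sum_congr rfl fun b _ => by ring

lemma triangleSum_convolution (N : ℕ) (c u e : ℕ → A) :
    triangleSum N (fun a => ∑ m ∈ range a, c m * u (a - 1 - m)) e
      = ∑ m ∈ range N, c m * triangleSum (N - 1 - m) u e := by
  set G : ℕ → ℕ → A := fun m a => c m * ∑ b ∈ range (N - m - a), (-1) ^ b * u a * e b
  have lhs : triangleSum N (fun a => ∑ m ∈ range a, c m * u (a - 1 - m)) e
      = ∑ i ∈ range N, ∑ m ∈ range (i + 1), G m (i - m) := by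
    rw [triangleSum, sum_range_succ']
    simp only [range_zero, sum_empty, mul_zero, zero_mul, sum_const_zero, add_zero, G, sum_mul,
      mul_sum]
    refine sum_congr rfl fun i _ => ?_
    rw [sum_comm]
    refine sum_congr rfl fun m hm => sum_congr (by grind) fun b _ => ?_
    rw [show i + 1 - 1 - m = i - m by grind]
    ring
  have rhs : ∑ m ∈ range N, c m * triangleSum (N - 1 - m) u e
      = ∑ m ∈ range N, ∑ a ∈ range (N - m), G m a := by
    refine sum_congr rfl fun m hm => ?_
    rw [triangleSum, mul_sum, show N - 1 - m + 1 = N - m by grind]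
  rw [lhs, rhs, sum_range_diag_flip]

end TriangleSum

lemma triangleSum_hZ_eZ (k n N : ℕ) : triangleSum N (hZ k n) (eZ k n) = 1 :=
  triangleSum_eq_one (by simp) (fun _ hs => sum_antidiagonal_hsymmF_mul_esymmF _ hs) N

lemma GZ_eq_triangleSum (k n j : ℕ) :
    GZ k n j = triangleSum k (fun a => hZ k n (j + a)) (eZ k n) := rfl

lemma GDagger_eq_triangleSum (k n j : ℕ) :
    GDagger k n j = triangleSum k (fun a => hPrime k n (j + a)) (eZ k n) := rfl

lemma GPrime_eq_sum_triangleSum (k n j : ℕ) :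
    GPrime k n j = ∑ c ∈ range (j + 1),
      (-1) ^ c * eZeta k n c * triangleSum k (fun a => hZ k n (j - c + a)) (eZ k n) := by
  rw [GPrime, Nat.sum_antidiagonal_eq_sum_range_succ_mk]
  simp only [GZ_eq_triangleSum]

lemma hPrime_add (k n j a : ℕ) :
    hPrime k n (j + a)
      = ∑ c ∈ range (j + 1), (-1) ^ c * eZeta k n c * hZ k n (j - c + a)
        + ∑ m ∈ range a, (-1) ^ (j + 1 + m) * eZeta k n (j + 1 + m) * hZ k n (a - 1 - m) := by
  rw [hPrime, Nat.sum_antidiagonal_eq_sum_range_succ_mk, show (j + a).succ = j + 1 + a by omega,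
    sum_range_add]
  refine congrArg₂ (· + ·) (sum_congr rfl fun c hc => ?_) (sum_congr rfl fun m _ => ?_)
  · rw [show j + a - c = j - c + a by grind]
  · rw [show j + a - (j + 1 + m) = a - 1 - m by omega]

theorem GDagger_sub_GPrime_general (k n : ℕ) (ℓ : ℕ) :
    GDagger k n ℓ - GPrime k n ℓ
      = (-1) ^ (ℓ + 1) * ∑ m ∈ Finset.Icc 1 k, (-1) ^ (m - 1) * eZeta k n (ℓ + m) := by
  have hsplit : GDagger k n ℓ
      = GPrime k n ℓ + ∑ m ∈ range k, (-1) ^ (ℓ + 1 + m) * eZeta k n (ℓ + 1 + m) := by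
    simp only [GDagger_eq_triangleSum, hPrime_add, triangleSum_add, triangleSum_sum_mul,
      triangleSum_convolution, triangleSum_hZ_eZ, mul_one, GPrime_eq_sum_triangleSum]
  rw [hsplit, add_sub_cancel_left, ← Ico_add_one_right_eq_Icc, sum_Ico_eq_sum_range,
    add_tsub_cancel_right, mul_sum]
  refine sum_congr rfl fun m _ => ?_
  rw [show 1 + m - 1 = m by omega, show ℓ + (1 + m) = ℓ + 1 + m by omega, pow_add]
  ring

/-- Comparison of the two equivariant deformations of Grothendieck polynomials:
for `ℓ ≥ 1`,
`G†_ℓ(z,ζ) − G'_ℓ(z,ζ) = (-1)^{ℓ+1} (e_{ℓ+1}(ζ) − e_{ℓ+2}(ζ) + ⋯ + (-1)^{k-1} e_{ℓ+k}(ζ))`. -/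
theorem GDagger_sub_GPrime (k n : ℕ) (hk : 1 ≤ k) (hn : 1 ≤ n) (ℓ : ℕ) (hℓ : 1 ≤ ℓ) :
    GDagger k n ℓ - GPrime k n ℓ
      = (-1) ^ (ℓ + 1) * ∑ m ∈ Finset.Icc 1 k, (-1) ^ (m - 1) * eZeta k n (ℓ + m) :=
  GDagger_sub_GPrime_general k n ℓ

end
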